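/- Let A be a ring, B ⊆ A a subring, d ≥ 1 an integer, and s, x, y ∈ A with x ∈ B, such that y commutes with every element of B, s·s = 1, x·y = y·x, and s·x = y·s − 1. Let M be an abelian group and T : A → M an additive map such that T(u) = 0 for every u in the additive subgroup of A generated by {b·s·b' : b, b' ∈ B}, and T(b·y^j) = 0 for every b ∈ B and every 0 ≤ j ≤ d−2. Then for every g in the additive subgroup of A generated by {b·y^m : b ∈ B, 0 ≤ m ≤ d−1}, one has T(s·g) = 0 and T(g·s) = 0. (Lemma 5.8 of the paper, with T the trace tr_{n+1} : H_{n+1}^λ → H_n^λ, s = s_n, x = x_n, y = x_{n+1}, B = H_n^λ.) -/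

import Mathlib

/-!
From `s * s = 1` and `y * s = s * x + 1` one gets `s * y = x * s + 1`, and iterating these
twisted commutation rules moves `s` across a power of `y`:
`s * y ^ m = x ^ m * s + ∑_{j < m} x ^ j * y ^ (m - 1 - j)`, and symmetrically on the right.
Since `x` and `y` commute with `B`, the leading term of `s * (b * y ^ m)` or `(b * y ^ m) * s`
lies in `B s B` and every other term is of the form `b' * y ^ k` with `b' ∈ B`, `k < m`;
both kinds are killed by `T`.
-/

open Finset MulOpposite

section TwistedCommutation

variable {R : Type*} [Ring R] {s x y : R}

theorem mul_eq_mul_add_one_of_mul_self_eq_one (hs : s * s = 1) (h : y * s = s * x + 1) :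
    s * y = x * s + 1 :=
  calc s * y = s * (y * s) * s := by rw [mul_assoc, mul_assoc, hs, mul_one]
    _ = x * s + 1 := by rw [h, mul_add, mul_one, add_mul, ← mul_assoc s s x, hs, one_mul]

theorem mul_pow_eq_of_mul_eq_mul_add_one (h : s * y = x * s + 1) (m : ℕ) :
    s * y ^ m = x ^ m * s + ∑ j ∈ range m, x ^ j * y ^ (m - 1 - j) := by
  induction m with
  | zero => simp
  | succ n ih =>
    calc s * y ^ (n + 1) = x * (s * y ^ n) + y ^ n := by
          rw [pow_succ', ← mul_assoc, h, add_mul, one_mul, mul_assoc]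
      _ = x ^ (n + 1) * s + ∑ j ∈ range (n + 1), x ^ j * y ^ (n + 1 - 1 - j) := by
          rw [ih, sum_range_succ', mul_add, mul_sum, ← mul_assoc, ← pow_succ', add_assoc]
          congr 2
          · refine sum_congr rfl fun j _ => ?_
            rw [← mul_assoc, ← pow_succ']
            congr 2
            omega
          · simp

theorem pow_mul_eq_of_mul_eq_mul_add_one (h : y * s = s * x + 1) (m : ℕ) :
    y ^ m * s = s * x ^ m + ∑ j ∈ range m, y ^ (m - 1 - j) * x ^ j := by
  have hop : op s * op y = op x * op s + 1 := by rw [← op_mul, h, op_add, op_mul, op_one]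
  simpa using congrArg unop (mul_pow_eq_of_mul_eq_mul_add_one hop m)

end TwistedCommutation

section Vanishing

variable {A M : Type*} [Ring A] [AddCommGroup M] {B : Subring A} {s x y : A} {T : A →+ M}
  {m : ℕ}

theorem map_sum_mul_pow_eq_zero (hT : ∀ b ∈ B, ∀ j < m, T (b * y ^ j) = 0) {c : ℕ → A}
    (hc : ∀ j, c j ∈ B) : T (∑ j ∈ range m, c j * y ^ (m - 1 - j)) = 0 := by
  rw [map_sum]
  exact sum_eq_zero fun j hj => hT _ (hc j) _ (by rw [mem_range] at hj; omega)

theorem map_mul_mul_pow_eq_zero (hsy : s * y = x * s + 1) (hx : x ∈ B)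
    (hTs : ∀ b ∈ B, ∀ b' ∈ B, T (b * s * b') = 0) (hT : ∀ b ∈ B, ∀ j < m, T (b * y ^ j) = 0)
    {b : A} (hb : b ∈ B) (hyb : Commute y b) : T (s * (b * y ^ m)) = 0 := by
  have expand : s * (b * y ^ m) = x ^ m * s * b + ∑ j ∈ range m, x ^ j * b * y ^ (m - 1 - j) := by
    rw [← (hyb.pow_left m).eq, ← mul_assoc, mul_pow_eq_of_mul_eq_mul_add_one hsy, add_mul,
      sum_mul]
    congr 1
    refine sum_congr rfl fun j _ => ?_
    rw [mul_assoc, (hyb.pow_left _).eq, ← mul_assoc]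
  rw [expand, map_add, hTs _ (pow_mem hx m) _ hb, zero_add]
  exact map_sum_mul_pow_eq_zero hT fun j => mul_mem (pow_mem hx j) hb

theorem map_mul_pow_mul_eq_zero (hys : y * s = s * x + 1) (hx : x ∈ B) (hxy : Commute x y)
    (hTs : ∀ b ∈ B, ∀ b' ∈ B, T (b * s * b') = 0) (hT : ∀ b ∈ B, ∀ j < m, T (b * y ^ j) = 0)
    {b : A} (hb : b ∈ B) : T (b * y ^ m * s) = 0 := by
  have expand : b * y ^ m * s = b * s * x ^ m + ∑ j ∈ range m, b * x ^ j * y ^ (m - 1 - j) := by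
    rw [mul_assoc, pow_mul_eq_of_mul_eq_mul_add_one hys, mul_add, mul_sum, ← mul_assoc]
    congr 1
    refine sum_congr rfl fun j _ => ?_
    rw [← (hxy.pow_pow j _).eq, mul_assoc]
  rw [expand, map_add, hTs _ hb _ (pow_mem hx m), zero_add]
  exact map_sum_mul_pow_eq_zero hT fun j => mul_mem hb (pow_mem hx j)

end Vanishing

theorem stmt9_general {A M : Type*} [Ring A] [AddCommGroup M] (B : Subring A)
    (d : ℕ)
    (s x y : A) (hx : x ∈ B)
    (hyB : ∀ b ∈ B, y * b = b * y)
    (hss : s * s = 1) (hsx : s * x = y * s - 1)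
    (T : A →+ M)
    (hT1 : ∀ u ∈ AddSubgroup.closure {z : A | ∃ b ∈ B, ∃ b' ∈ B, z = b * s * b'}, T u = 0)
    (hT2 : ∀ b ∈ B, ∀ j : ℕ, j + 2 ≤ d → T (b * y ^ j) = 0)
    (g : A)
    (hg : g ∈ AddSubgroup.closure {w : A | ∃ b ∈ B, ∃ m : ℕ, m < d ∧ w = b * y ^ m}) :
    T (s * g) = 0 ∧ T (g * s) = 0 := by
  have hys : y * s = s * x + 1 := by rw [hsx, sub_add_cancel]
  have hsy := mul_eq_mul_add_one_of_mul_self_eq_one hss hys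
  have hTs : ∀ b ∈ B, ∀ b' ∈ B, T (b * s * b') = 0 := fun b hb b' hb' =>
    hT1 _ (AddSubgroup.subset_closure ⟨b, hb, b', hb', rfl⟩)
  have hTy : ∀ m < d, ∀ b ∈ B, ∀ j < m, T (b * y ^ j) = 0 := fun m hm b hb j hj =>
    hT2 b hb j (by omega)
  refine ⟨(AddSubgroup.closure_le (K := (T.comp (AddMonoidHom.mulLeft s)).ker)).2 ?_ hg,
    (AddSubgroup.closure_le (K := (T.comp (AddMonoidHom.mulRight s)).ker)).2 ?_ hg⟩
  · rintro _ ⟨b, hb, m, hm, rfl⟩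
    exact map_mul_mul_pow_eq_zero hsy hx hTs (hTy m hm) hb (hyB b hb)
  · rintro _ ⟨b, hb, m, hm, rfl⟩
    exact map_mul_pow_mul_eq_zero hys hx (hyB x hx).symm hTs (hTy m hm) hb

/-- Lemma 5.8: if the additive map `T` kills `B s B` and kills `b ⬝ y^j` for `0 ≤ j ≤ d - 2`,
then `T (s ⬝ g) = 0 = T (g ⬝ s)` for every `g` in the additive subgroup generated by the
`b ⬝ y^m` with `0 ≤ m ≤ d - 1`. -/
theorem stmt9 {A M : Type*} [Ring A] [AddCommGroup M] (B : Subring A)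
    (d : ℕ) (hd : 1 ≤ d)
    (s x y : A) (hx : x ∈ B)
    (hyB : ∀ b ∈ B, y * b = b * y)
    (hss : s * s = 1) (hxy : x * y = y * x) (hsx : s * x = y * s - 1)
    (T : A →+ M)
    (hT1 : ∀ u ∈ AddSubgroup.closure {z : A | ∃ b ∈ B, ∃ b' ∈ B, z = b * s * b'}, T u = 0)
    (hT2 : ∀ b ∈ B, ∀ j : ℕ, j + 2 ≤ d → T (b * y ^ j) = 0)
    (g : A)
    (hg : g ∈ AddSubgroup.closure {w : A | ∃ b ∈ B, ∃ m : ℕ, m < d ∧ w = b * y ^ m}) :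
    T (s * g) = 0 ∧ T (g * s) = 0 :=
  stmt9_general B d s x y hx hyB hss hsx T hT1 hT2 g hg
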